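/- (Proposition 3) Let d ≥ 1 and let {S_p}_{p=0}^{d²-1} and {R_q}_{q=0}^{d²-1} be two families of unitary operators on ℂ^d, each family pairwise Hilbert–Schmidt orthogonal with Tr(S_p* S_{p'}) = d·δ_{pp'} and Tr(R_q* R_{q'}) = d·δ_{qq'} (so each is an orthogonal unitary basis of the full d²-dimensional space of operators on ℂ^d). Suppose that for every pair (p, q) there exists an orthonormal basis {ν_i}_{i=0}^{d²-1} of ℂ^d ⊗ ℂ^d (depending on p, q) with |⟨ν_i, (S_p R_q* ⊗ I) ν_j⟩| = 1/d for all indices i, j. Then the two bases are mutually unbiased: |Tr(S_p R_q*)| = 1 for all p, q. -/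

import Mathlib

/-!
Averaging the diagonal of `(S_p R_q*) ⊗ I` over the tester basis gives
`d |Tr(S_p R_q*)| ≤ d² · (1/d)`, so every overlap `|Tr(S_p R_q*)|` is at most `1`.
On the other hand `{S_p / √d}` is an orthonormal basis of the Hilbert–Schmidt space, so
Parseval applied to `R_q` gives `∑_p |Tr(S_p* R_q)|² = d · Tr(R_q* R_q) = d²`.
With `d²` terms, each at most `1`, all of them equal `1`.
-/

open scoped ComplexInnerProductSpace Matrix Kronecker

noncomputable section

/-- Action of a matrix indexed by `Fin d × Fin d` on `ℂ^d ⊗ ℂ^d`. -/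
def act2 {d : ℕ} (M : Matrix (Fin d × Fin d) (Fin d × Fin d) ℂ)
    (ψ : EuclideanSpace ℂ (Fin d × Fin d)) : EuclideanSpace ℂ (Fin d × Fin d) :=
  Matrix.toEuclideanLin M ψ

open scoped InnerProductSpace

section InnerProductSpace

variable {𝕜 E ι : Type*} [RCLike 𝕜] [NormedAddCommGroup E] [InnerProductSpace 𝕜 E] [Fintype ι]

theorem Orthonormal.sum_sq_norm_inner_of_card_eq_finrank [FiniteDimensional 𝕜 E] {v : ι → E}
    (hv : Orthonormal 𝕜 v) (hcard : Fintype.card ι = Module.finrank 𝕜 E) (x : E) :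
    ∑ i, ‖⟪v i, x⟫_𝕜‖ ^ 2 = ‖x‖ ^ 2 := by
  have hspan := hv.linearIndependent.span_eq_top_of_card_eq_finrank' hcard
  simpa using (OrthonormalBasis.mk hv hspan.ge).sum_sq_norm_inner_right x

theorem sum_sq_norm_inner_eq_mul_sq_norm [DecidableEq ι] [FiniteDimensional 𝕜 E]
    {e : ι → E} {c : ℝ} (hc : 0 < c) (he : ∀ i j, ⟪e i, e j⟫_𝕜 = if i = j then (c : 𝕜) else 0)
    (hcard : Fintype.card ι = Module.finrank 𝕜 E) (x : E) :
    ∑ i, ‖⟪e i, x⟫_𝕜‖ ^ 2 = c * ‖x‖ ^ 2 := by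
  set s : 𝕜 := (((√c)⁻¹ : ℝ) : 𝕜) with hs_def
  have hs : s * ((starRingEnd 𝕜) s * c) = 1 := by
    rw [RCLike.conj_ofReal, ← RCLike.ofReal_mul, ← RCLike.ofReal_mul, ← RCLike.ofReal_one]
    congr 1
    field_simp
    exact (Real.sq_sqrt hc.le).symm
  have hv : Orthonormal 𝕜 fun i => s • e i := by
    rw [orthonormal_iff_ite]
    intro i j
    simp only [inner_smul_left, inner_smul_right, he]
    split_ifs
    · exact hs
    · simp
  have := hv.sum_sq_norm_inner_of_card_eq_finrank hcard x
  simp only [inner_smul_left, norm_mul, RCLike.norm_conj, mul_pow, ← Finset.mul_sum] at this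
  rw [← this, hs_def, RCLike.norm_ofReal, sq_abs, inv_pow, Real.sq_sqrt hc.le,
    mul_inv_cancel_left₀ hc.ne']

theorem LinearMap.norm_trace_le_of_norm_inner_le (T : E →ₗ[𝕜] E) (b : OrthonormalBasis ι 𝕜 E)
    {r : ℝ} (h : ∀ i, ‖⟪b i, T (b i)⟫_𝕜‖ ≤ r) : ‖T.trace 𝕜 E‖ ≤ Fintype.card ι * r := by
  rw [T.trace_eq_sum_inner b]
  calc ‖∑ i, ⟪b i, T (b i)⟫_𝕜‖ ≤ ∑ i, ‖⟪b i, T (b i)⟫_𝕜‖ := norm_sum_le _ _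
    _ ≤ ∑ _i : ι, r := Finset.sum_le_sum fun i _ => h i
    _ = Fintype.card ι * r := by simp

end InnerProductSpace

namespace Matrix

variable {𝕜 m n : Type*} [RCLike 𝕜] [Fintype m] [Fintype n]

theorem norm_trace_le_one_of_norm_inner_kronecker_one_le [DecidableEq n] (M : Matrix n n 𝕜)
    (ν : OrthonormalBasis (n × n) 𝕜 (EuclideanSpace 𝕜 (n × n)))
    (h : ∀ i, ‖⟪ν i, toEuclideanLin (M ⊗ₖ (1 : Matrix n n 𝕜)) (ν i)⟫_𝕜‖ ≤ 1 / Fintype.card n) :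
    ‖M.trace‖ ≤ 1 := by
  have htrace := (toEuclideanLin (M ⊗ₖ (1 : Matrix n n 𝕜))).norm_trace_le_of_norm_inner_le ν h
  rw [toEuclideanLin_eq_toLin_orthonormal, trace_toLin_eq, trace_kronecker, trace_one, norm_mul,
    RCLike.norm_natCast, Fintype.card_prod, Nat.cast_mul] at htrace
  rcases (Fintype.card n).eq_zero_or_pos with h0 | hpos
  · have : IsEmpty n := Fintype.card_eq_zero_iff.1 h0
    simp [trace]
  · have hk : (0 : ℝ) < Fintype.card n := by exact_mod_cast hpos
    rw [mul_assoc, mul_one_div_cancel hk.ne', mul_one] at htrace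
    exact le_of_mul_le_mul_right (by simpa using htrace) hk

def toHSVec (A : Matrix m n 𝕜) : EuclideanSpace 𝕜 (m × n) :=
  WithLp.toLp 2 fun ij => A ij.1 ij.2

theorem inner_toHSVec (A B : Matrix m n 𝕜) : ⟪A.toHSVec, B.toHSVec⟫_𝕜 = (Aᴴ * B).trace := by
  simp only [PiLp.inner_apply, toHSVec, RCLike.inner_apply, trace,
    diag_apply, mul_apply, conjTranspose_apply, Fintype.sum_prod_type, mul_comm (B _ _)]
  exact Finset.sum_comm

theorem sum_sq_norm_trace_conjTranspose_mul {ι : Type*} [Fintype ι] [DecidableEq ι]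
    {S : ι → Matrix n n 𝕜} {c : ℝ} (hc : 0 < c)
    (hS : ∀ p p', ((S p)ᴴ * S p').trace = if p = p' then (c : 𝕜) else 0)
    (hcard : Fintype.card ι = Fintype.card n * Fintype.card n) (X : Matrix n n 𝕜) :
    ∑ p, ‖((S p)ᴴ * X).trace‖ ^ 2 = c * RCLike.re (Xᴴ * X).trace := by
  have := sum_sq_norm_inner_eq_mul_sq_norm (𝕜 := 𝕜) (e := fun p => (S p).toHSVec) hc
    (by simpa only [inner_toHSVec] using hS) (by simp [hcard]) X.toHSVec
  simpa only [inner_toHSVec, @norm_sq_eq_re_inner 𝕜] using this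

theorem norm_trace_mul_conjTranspose (A B : Matrix n n 𝕜) :
    ‖(A * Bᴴ).trace‖ = ‖(Aᴴ * B).trace‖ := by
  rw [← norm_star (Aᴴ * B).trace, ← trace_conjTranspose, conjTranspose_mul,
    conjTranspose_conjTranspose, trace_mul_comm]

end Matrix

theorem stmt_13_general {d : ℕ}
    (S R : Fin (d * d) → Matrix (Fin d) (Fin d) ℂ)
    (hSorth : ∀ p p', Matrix.trace ((S p)ᴴ * S p') = if p = p' then (d : ℂ) else 0)
    (hRorth : ∀ q q', Matrix.trace ((R q)ᴴ * R q') = if q = q' then (d : ℂ) else 0)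
    (hsat : ∀ p q : Fin (d * d),
      ∃ ν : OrthonormalBasis (Fin d × Fin d) ℂ (EuclideanSpace ℂ (Fin d × Fin d)),
        ∀ i j : Fin d × Fin d,
          ‖⟪ν i, act2 ((S p * (R q)ᴴ) ⊗ₖ (1 : Matrix (Fin d) (Fin d) ℂ)) (ν j)⟫‖ = 1 / d) :
    ∀ p q : Fin (d * d), ‖Matrix.trace (S p * (R q)ᴴ)‖ = 1 := by
  intro p q
  have hd : 0 < d := Nat.pos_of_mul_pos_left p.pos
  have hle : ∀ p', ‖(S p' * (R q)ᴴ).trace‖ ^ 2 ≤ 1 := fun p' => by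
    obtain ⟨ν, hν⟩ := hsat p' q
    refine pow_le_one₀ (norm_nonneg _)
      ((S p' * (R q)ᴴ).norm_trace_le_one_of_norm_inner_kronecker_one_le ν fun i => ?_)
    simpa [act2] using (hν i i).le
  have hsum : ∑ p', ‖(S p' * (R q)ᴴ).trace‖ ^ 2 = ∑ _p' : Fin (d * d), (1 : ℝ) := by
    simp_rw [Matrix.norm_trace_mul_conjTranspose]
    rw [Matrix.sum_sq_norm_trace_conjTranspose_mul (c := d) (by positivity) (by simpa using hSorth)
      (by simp) (R q), hRorth, if_pos rfl]
    simp
  have hsq := (Finset.sum_eq_sum_iff_of_le fun p' _ => hle p').1 hsum p (Finset.mem_univ _)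
  exact (pow_eq_one_iff_of_nonneg (norm_nonneg _) two_ne_zero).1 hsq

/-- Proposition 3: two orthogonal unitary bases of the full `d²`-dimensional
space of operators on `ℂ^d`, all of whose pairs saturate the maximal entropic
bound for some tester with maximally entangled input, are mutually unbiased. -/
theorem stmt_13 {d : ℕ} (hd : 1 ≤ d)
    (S R : Fin (d * d) → Matrix (Fin d) (Fin d) ℂ)
    (hSu : ∀ p, S p ∈ Matrix.unitaryGroup (Fin d) ℂ)
    (hRu : ∀ q, R q ∈ Matrix.unitaryGroup (Fin d) ℂ)
    (hSorth : ∀ p p', Matrix.trace ((S p)ᴴ * S p') = if p = p' then (d : ℂ) else 0)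
    (hRorth : ∀ q q', Matrix.trace ((R q)ᴴ * R q') = if q = q' then (d : ℂ) else 0)
    (hsat : ∀ p q : Fin (d * d),
      ∃ ν : OrthonormalBasis (Fin d × Fin d) ℂ (EuclideanSpace ℂ (Fin d × Fin d)),
        ∀ i j : Fin d × Fin d,
          ‖⟪ν i, act2 ((S p * (R q)ᴴ) ⊗ₖ (1 : Matrix (Fin d) (Fin d) ℂ)) (ν j)⟫‖ = 1 / d) :
    ∀ p q : Fin (d * d), ‖Matrix.trace (S p * (R q)ᴴ)‖ = 1 :=
  stmt_13_general S R hSorth hRorth hsat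

end
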